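/- arXiv:1104.4773 — 6 statements merged into one kernel-verified Lean document; each statement's English description precedes it below -/
import Mathlib

section
/- If ⟨·,·⟩ is an ad-invariant nondegenerate symmetric bilinear form on a finite-dimensional Lie algebra g, then for every r ≥ 0 the orthogonal complement of the r-th term C^r(g) of the lower central series equals the r-th term C_r(g) of the upper central series. -/
/-!
Invariance `Φ ⁅a, n⁆ y = -Φ n ⁅a, y⁆` says that `y` is orthogonal to `⁅L, N⁆` exactly when every
`⁅a, y⁆` is orthogonal to `N`, i.e. `(⁅L, N⁆)^⊥` is the normalizer of `N^⊥`. Since the lower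
central series is built by `N ↦ ⁅L, N⁆` and the upper one by taking normalizers, induction from
`L^⊥ = 0` matches the two series term by term.
-/

namespace LieAlgebra.InvariantForm

variable {R L M : Type*} [CommRing R] [LieRing L] [AddCommGroup M] [Module R M]
  [LieRingModule L M]
  {Φ : LinearMap.BilinForm R M} (hΦ : Φ.lieInvariant L)

lemma orthogonal_top_eq_bot (hΦ_sep : Φ.SeparatingRight) : orthogonal Φ hΦ ⊤ = ⊥ := by
  ext y
  simp only [mem_orthogonal, LieSubmodule.mem_top, true_implies, LieSubmodule.mem_bot]
  exact ⟨hΦ_sep y, fun hy x => hy ▸ map_zero (Φ x)⟩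

variable [LieAlgebra R L] [LieModule R L M]

lemma orthogonal_lie_top_eq_normalizer (N : LieSubmodule R L M) :
    orthogonal Φ hΦ ⁅(⊤ : LieIdeal R L), N⁆ = (orthogonal Φ hΦ N).normalizer := by
  ext y
  simp only [LieSubmodule.mem_normalizer, mem_orthogonal]
  constructor
  · intro hy a n hn
    rw [← neg_eq_zero, ← hΦ]
    exact hy _ (LieSubmodule.lie_mem_lie (LieSubmodule.mem_top a) hn)
  · intro hy x hx
    rw [← LieSubmodule.mem_toSubmodule, LieSubmodule.lieIdeal_oper_eq_linear_span'] at hx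
    suffices Submodule.span R {m | ∃ a ∈ (⊤ : LieIdeal R L), ∃ n ∈ N, ⁅a, n⁆ = m} ≤
        LinearMap.ker (Φ.flip y) from this hx
    rw [Submodule.span_le]
    rintro _ ⟨a, -, n, hn, rfl⟩
    change Φ ⁅a, n⁆ y = 0
    rw [hΦ, hy a n hn, neg_zero]

lemma orthogonal_lowerCentralSeries_eq_ucs (hΦ_sep : Φ.SeparatingRight) (k : ℕ) :
    orthogonal Φ hΦ (LieModule.lowerCentralSeries R L M k) = (⊥ : LieSubmodule R L M).ucs k := by
  induction k with
  | zero => exact orthogonal_top_eq_bot hΦ hΦ_sep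
  | succ k ih =>
    rw [LieModule.lowerCentralSeries_succ, orthogonal_lie_top_eq_normalizer, ih,
      LieSubmodule.ucs_succ]

end LieAlgebra.InvariantForm

theorem orthogonal_lcs_eq_ucs_general
    {K L : Type*} [Field K] [LieRing L] [LieAlgebra K L]
    (B : L →ₗ[K] L →ₗ[K] K)
    (hnd : ∀ x : L, (∀ y : L, B x y = 0) → x = 0)
    (hinv : ∀ x y z : L, B ⁅x, y⁆ z + B y ⁅x, z⁆ = 0) :
    ∀ r : ℕ, ∀ x : L,
      (∀ v ∈ LieModule.lowerCentralSeries K L L r, B x v = 0) ↔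
        x ∈ (⊥ : LieSubmodule K L L).ucs r := by
  intro r x
  have hB_inv : LinearMap.BilinForm.lieInvariant L B.flip := fun a y z =>
    eq_neg_of_add_eq_zero_right (hinv a z y)
  rw [← LieAlgebra.InvariantForm.orthogonal_lowerCentralSeries_eq_ucs hB_inv
    (LinearMap.flip_separatingRight.mpr hnd), LieAlgebra.InvariantForm.mem_orthogonal]
  rfl

/-- With respect to an ad-invariant nondegenerate symmetric bilinear form, the orthogonal
complement of the r-th term of the lower central series equals the r-th term of the
upper central series. -/
theorem orthogonal_lcs_eq_ucs
    {K L : Type*} [Field K] [CharZero K] [LieRing L] [LieAlgebra K L]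
    [FiniteDimensional K L]
    (B : L →ₗ[K] L →ₗ[K] K)
    (hsymm : ∀ x y : L, B x y = B y x)
    (hnd : ∀ x : L, (∀ y : L, B x y = 0) → x = 0)
    (hinv : ∀ x y z : L, B ⁅x, y⁆ z + B y ⁅x, z⁆ = 0) :
    ∀ r : ℕ, ∀ x : L,
      (∀ v ∈ LieModule.lowerCentralSeries K L L r, B x v = 0) ↔
        x ∈ (⊥ : LieSubmodule K L L).ucs r :=
  orthogonal_lcs_eq_ucs_general B hnd hinv
end

section
/- Let g be a 2-step nilpotent Lie algebra whose center equals its commutator ideal and which admits an ad-invariant nondegenerate symmetric bilinear form. Then dim g = 2 · dim z(g). -/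
/-!
Invariance, `Φ ⁅a, b⁆ y = -Φ b ⁅a, y⁆`, and nondegeneracy identify the orthogonal of the derived
algebra `[g, g]` with the center, so `dim [g, g] + dim z(g) = dim g` for every Lie algebra with a
nondegenerate invariant form. When `z(g) = [g, g]` this reads `dim g = 2 dim z(g)`.
-/

open Module

namespace LieAlgebra.InvariantForm

variable {R L : Type*} [CommRing R] [LieRing L] [LieAlgebra R L]

lemma mem_orthogonal_top_lie_top_iff (Φ : LinearMap.BilinForm R L) (hΦ_inv : Φ.lieInvariant L)
    (y : L) : y ∈ orthogonal Φ hΦ_inv ⁅(⊤ : LieIdeal R L), ⊤⁆ ↔ ∀ a b : L, Φ ⁅a, b⁆ y = 0 := by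
  rw [mem_orthogonal]
  change (⁅(⊤ : LieIdeal R L), ⊤⁆ : LieIdeal R L).toSubmodule ≤ LinearMap.ker (Φ.flip y) ↔ _
  rw [LieSubmodule.lieIdeal_oper_eq_linear_span', Submodule.span_le]
  exact ⟨fun h a b => h ⟨a, trivial, b, trivial, rfl⟩, fun h _ ⟨a, _, b, _, hab⟩ => hab ▸ h a b⟩

lemma orthogonal_top_lie_top_eq_center (Φ : LinearMap.BilinForm R L) (hΦ_inv : Φ.lieInvariant L)
    (hΦ_sep : Φ.SeparatingRight) :
    orthogonal Φ hΦ_inv ⁅(⊤ : LieIdeal R L), ⊤⁆ = center R L := by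
  ext y
  rw [mem_orthogonal_top_lie_top_iff, center, LieModule.mem_maxTrivSubmodule]
  refine forall_congr' fun a => ?_
  simp only [hΦ_inv a _ y, neg_eq_zero]
  exact ⟨hΦ_sep _, fun h b => by rw [h, map_zero]⟩

variable {K : Type*} [Field K] [LieAlgebra K L] [FiniteDimensional K L]

lemma finrank_top_lie_top_add_finrank_center (Φ : LinearMap.BilinForm K L)
    (hΦ_nondeg : Φ.Nondegenerate) (hΦ_inv : Φ.lieInvariant L) :
    finrank K (LieSubmodule.toSubmodule (⁅(⊤ : LieIdeal K L), ⊤⁆ : LieIdeal K L)) +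
      finrank K (LieSubmodule.toSubmodule (center K L)) = finrank K L := by
  rw [← orthogonal_top_lie_top_eq_center Φ hΦ_inv hΦ_nondeg.2, orthogonal_toSubmodule]
  have h := Φ.finrank_add_finrank_orthogonal' (⁅(⊤ : LieIdeal K L), ⊤⁆ : LieIdeal K L).toSubmodule
  rwa [hΦ_nondeg.ker_eq_bot, inf_bot_eq, finrank_bot, add_zero] at h

end LieAlgebra.InvariantForm

theorem finrank_eq_two_mul_finrank_center_general
    {K L : Type*} [Field K] [LieRing L] [LieAlgebra K L]
    [FiniteDimensional K L]
    (hzc : (LieAlgebra.center K L : LieSubmodule K L L) =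
      (⁅(⊤ : LieIdeal K L), (⊤ : LieIdeal K L)⁆ : LieIdeal K L))
    (B : L →ₗ[K] L →ₗ[K] K)
    (hsymm : ∀ x y : L, B x y = B y x)
    (hnd : ∀ x : L, (∀ y : L, B x y = 0) → x = 0)
    (hinv : ∀ x y z : L, B ⁅x, y⁆ z + B y ⁅x, z⁆ = 0) :
    Module.finrank K L =
      2 * Module.finrank K ((LieAlgebra.center K L : LieSubmodule K L L) : Submodule K L) := by
  have hB_nondeg : B.Nondegenerate := ⟨hnd, fun y hy => hnd y fun x => hsymm y x ▸ hy x⟩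
  have hB_inv : LinearMap.BilinForm.lieInvariant L B := fun x y z =>
    eq_neg_of_add_eq_zero_left (hinv x y z)
  have hdim := LieAlgebra.InvariantForm.finrank_top_lie_top_add_finrank_center B hB_nondeg hB_inv
  rw [← hzc] at hdim
  rw [LieIdeal.toLieSubalgebra_toSubmodule]
  omega

/-- A 2-step nilpotent Lie algebra whose center equals its commutator ideal and which
admits an ad-invariant nondegenerate symmetric bilinear form satisfies
dim g = 2 · dim z(g). -/
theorem finrank_eq_two_mul_finrank_center
    {K L : Type*} [Field K] [CharZero K] [LieRing L] [LieAlgebra K L]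
    [FiniteDimensional K L]
    (h2 : LieModule.lowerCentralSeries K L L 2 = ⊥)
    (hne : LieModule.lowerCentralSeries K L L 1 ≠ ⊥)
    (hzc : (LieAlgebra.center K L : LieSubmodule K L L) =
      (⁅(⊤ : LieIdeal K L), (⊤ : LieIdeal K L)⁆ : LieIdeal K L))
    (B : L →ₗ[K] L →ₗ[K] K)
    (hsymm : ∀ x y : L, B x y = B y x)
    (hnd : ∀ x : L, (∀ y : L, B x y = 0) → x = 0)
    (hinv : ∀ x y z : L, B ⁅x, y⁆ z + B y ⁅x, z⁆ = 0) :
    Module.finrank K L =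
      2 * Module.finrank K ((LieAlgebra.center K L : LieSubmodule K L L) : Submodule K L) :=
  finrank_eq_two_mul_finrank_center_general hzc B hsymm hnd hinv
end

section
/- In a Lie algebra with an ad-invariant nondegenerate symmetric bilinear form and abelian commutator ideal, for all x ∈ [g,g] and all u ∈ g one has [u,x] ∈ z(g). -/
/-!
For `x` commuting with every bracket `⁅m, w⁆`, invariance moves the brackets across the form:
`B ⁅m, ⁅u, x⁆⁆ w = -B u ⁅x, ⁅m, w⁆⁆ = 0` for all `w`, so `⁅m, ⁅u, x⁆⁆ = 0` by nondegeneracy.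
Every `x ∈ [g, g]` commutes with the brackets because `[g, g]` is abelian.
-/

namespace LieAlgebra

variable {R L : Type*} [CommRing R] [LieRing L] [LieAlgebra R L]

theorem lie_eq_zero_of_mem_commutator (h : derivedSeries R L 2 = ⊥) {a b : L}
    (ha : a ∈ ⁅(⊤ : LieIdeal R L), (⊤ : LieIdeal R L)⁆)
    (hb : b ∈ ⁅(⊤ : LieIdeal R L), (⊤ : LieIdeal R L)⁆) : ⁅a, b⁆ = 0 := by
  have hab : ⁅a, b⁆ ∈ derivedSeries R L 2 := by
    simpa only [derivedSeries_def, derivedSeriesOfIdeal_succ, derivedSeriesOfIdeal_zero]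
      using LieSubmodule.lie_mem_lie ha hb
  simpa only [h, LieSubmodule.mem_bot] using hab

theorem _root_.LinearMap.BilinForm.lieInvariant.apply_lie_lie {B : LinearMap.BilinForm R L}
    (hB : B.lieInvariant L) (m u x w : L) : B ⁅m, ⁅u, x⁆⁆ w = -B u ⁅x, ⁅m, w⁆⁆ := by
  rw [hB, ← lie_skew u x, map_neg, LinearMap.neg_apply, neg_neg, hB]

theorem lie_mem_center_of_lie_lie_eq_zero {B : LinearMap.BilinForm R L}
    (hB : B.lieInvariant L) (hnd : B.SeparatingLeft) {x : L} (hx : ∀ m w : L, ⁅x, ⁅m, w⁆⁆ = 0)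
    (u : L) : ⁅u, x⁆ ∈ center R L := by
  rw [center, LieModule.mem_maxTrivSubmodule]
  refine fun m ↦ hnd _ fun w ↦ ?_
  rw [hB.apply_lie_lie, hx, map_zero, neg_zero]

end LieAlgebra

theorem bracket_commutator_mem_center_general
    {K L : Type*} [Field K] [LieRing L] [LieAlgebra K L]
    (hsolv : LieAlgebra.derivedSeries K L 2 = ⊥)
    (B : L →ₗ[K] L →ₗ[K] K)
    (hnd : ∀ x : L, (∀ y : L, B x y = 0) → x = 0)
    (hinv : ∀ x y z : L, B ⁅x, y⁆ z + B y ⁅x, z⁆ = 0) :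
    ∀ u : L, ∀ x ∈ (⁅(⊤ : LieIdeal K L), (⊤ : LieIdeal K L)⁆ : LieIdeal K L),
      ⁅u, x⁆ ∈ LieAlgebra.center K L := by
  intro u x hx
  have hB : LinearMap.BilinForm.lieInvariant L B := fun a b c ↦
    eq_neg_of_add_eq_zero_left (hinv a b c)
  refine LieAlgebra.lie_mem_center_of_lie_lie_eq_zero hB hnd (fun m w ↦ ?_) u
  exact LieAlgebra.lie_eq_zero_of_mem_commutator hsolv hx
    (LieSubmodule.lie_mem_lie (LieSubmodule.mem_top m) (LieSubmodule.mem_top w))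

/-- In a Lie algebra with abelian commutator ideal and an ad-invariant nondegenerate
symmetric bilinear form, for all x ∈ [g,g] and u ∈ g one has [u,x] ∈ z(g). -/
theorem bracket_commutator_mem_center
    {K L : Type*} [Field K] [CharZero K] [LieRing L] [LieAlgebra K L]
    [FiniteDimensional K L]
    (hsolv : LieAlgebra.derivedSeries K L 2 = ⊥)
    (B : L →ₗ[K] L →ₗ[K] K)
    (hsymm : ∀ x y : L, B x y = B y x)
    (hnd : ∀ x : L, (∀ y : L, B x y = 0) → x = 0)
    (hinv : ∀ x y z : L, B ⁅x, y⁆ z + B y ⁅x, z⁆ = 0) :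
    ∀ u : L, ∀ x ∈ (⁅(⊤ : LieIdeal K L), (⊤ : LieIdeal K L)⁆ : LieIdeal K L),
      ⁅u, x⁆ ∈ LieAlgebra.center K L :=
  bracket_commutator_mem_center_general hsolv B hnd hinv
end

section
/- The 6-dimensional free 2-step nilpotent Lie algebra n_{3,2} on three generators admits an ad-invariant nondegenerate symmetric bilinear form. Concretely, with basis e_1,…,e_6 and brackets [e_1,e_2]=e_4, [e_1,e_3]=e_5, [e_2,e_3]=e_6, the bilinear form B with B(e_1,e_6)=B(e_3,e_4)=1, B(e_2,e_5)=−1, symmetric, and all other pairings of basis vectors zero, is nondegenerate and satisfies B([x,y],z) = −B(y,[x,z]) for all x,y,z. -/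
/-!
Write V = span{e₁, e₂, e₃}, so that ⁅L, L⁆ = span{e₄, e₅, e₆} is central. The form vanishes on V × V
and on the centre, and B(x, ⁅y, z⁆) = det(x, y, z) for x, y, z ∈ V. Hence both sides of
B(⁅x, y⁆, z) = -B(y, ⁅x, z⁆) equal the determinant of the V-components of x, y, z; being
trilinear, the identity is checked on basis triples. The Gram matrix is a symmetric signed
permutation matrix squaring to 1, hence nondegenerate.
-/

section

variable {R L M ι κ : Type*} [CommRing R] [LieRing L] [LieAlgebra R L]
  [AddCommGroup M] [Module R M] [LieRingModule L M] [LieModule R L M]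

theorem LinearMap.BilinForm.lieInvariant_of_basis (bL : Module.Basis ι R L)
    (bM : Module.Basis κ R M) (Φ : LinearMap.BilinForm R M)
    (h : ∀ i j k, Φ ⁅bL i, bM j⁆ (bM k) = -Φ (bM j) ⁅bL i, bM k⁆) :
    Φ.lieInvariant L := by
  rw [lieInvariant_iff, LieModule.mem_maxTrivSubmodule]
  suffices (LinearMap.applyₗ Φ).comp
      (LieModule.toEnd R L (LinearMap.BilinForm R M) : L →ₗ[R] Module.End R _) = 0 from
    fun x ↦ by simpa using LinearMap.congr_fun this x
  refine bL.ext fun i ↦ LinearMap.ext_basis bM bM fun j k ↦ ?_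
  simp [h]

end

def n32Form (K : Type*) [Ring K] : Matrix (Fin 6) (Fin 6) K :=
  !![0, 0, 0, 0, 0, 1;
     0, 0, 0, 0, -1, 0;
     0, 0, 0, 1, 0, 0;
     0, 0, 1, 0, 0, 0;
     0, -1, 0, 0, 0, 0;
     1, 0, 0, 0, 0, 0]

theorem n32Form_isSymm (K : Type*) [Ring K] : (n32Form K).IsSymm := by
  ext i j
  fin_cases i <;> fin_cases j <;> rfl

theorem n32Form_mul_self (K : Type*) [Ring K] : n32Form K * n32Form K = 1 := by
  ext i j
  fin_cases i <;> fin_cases j <;> simp [n32Form, Matrix.mul_apply, Fin.sum_univ_six]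

theorem n32Form_nondegenerate (K : Type*) [CommRing K] [IsDomain K] :
    (n32Form K).Nondegenerate :=
  Matrix.nondegenerate_of_det_ne_zero (Matrix.det_ne_zero_of_right_inverse (n32Form_mul_self K))

theorem lieInvariant_of_gram_eq_n32Form {K L : Type*} [CommRing K] [LieRing L] [LieAlgebra K L]
    (b : Module.Basis (Fin 6) K L)
    (h12 : ⁅b 0, b 1⁆ = b 3) (h13 : ⁅b 0, b 2⁆ = b 4) (h23 : ⁅b 1, b 2⁆ = b 5)
    (hz : ∀ i j : Fin 6, 3 ≤ j.val → ⁅b i, b j⁆ = 0)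
    (B : LinearMap.BilinForm K L) (hB : ∀ i j, B (b i) (b j) = n32Form K i j) :
    B.lieInvariant L := by
  refine LinearMap.BilinForm.lieInvariant_of_basis b b B fun i j k ↦ ?_
  have h21 : ⁅b 1, b 0⁆ = -b 3 := by rw [← lie_skew, h12]
  have h31 : ⁅b 2, b 0⁆ = -b 4 := by rw [← lie_skew, h13]
  have h32 : ⁅b 2, b 1⁆ = -b 5 := by rw [← lie_skew, h23]
  obtain hi | hi := lt_or_ge i.val 3
  · obtain rfl | rfl | rfl : i = 0 ∨ i = 1 ∨ i = 2 := by omega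
    all_goals fin_cases j <;> fin_cases k <;> simp [h12, h13, h23, h21, h31, h32, hz, hB, n32Form]
  · have central : ∀ j, ⁅b i, b j⁆ = 0 := fun j ↦ by rw [← lie_skew, hz j i hi, neg_zero]
    simp [central]

theorem n32_admits_ad_invariant_metric_general
    {K L : Type*} [Field K] [LieRing L] [LieAlgebra K L]
    (b : Module.Basis (Fin 6) K L)
    (h12 : ⁅b 0, b 1⁆ = b 3) (h13 : ⁅b 0, b 2⁆ = b 4) (h23 : ⁅b 1, b 2⁆ = b 5)
    (hz : ∀ i j : Fin 6, 3 ≤ j.val → ⁅b i, b j⁆ = 0) :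
    ∃ B : L →ₗ[K] L →ₗ[K] K,
      (∀ x y : L, B x y = B y x) ∧
      (∀ x : L, (∀ y : L, B x y = 0) → x = 0) ∧
      (∀ x y z : L, B ⁅x, y⁆ z = - B y ⁅x, z⁆) ∧
      (∀ i j : Fin 6, B (b i) (b j) =
        (!![0, 0, 0, 0, 0, 1;
            0, 0, 0, 0, -1, 0;
            0, 0, 0, 1, 0, 0;
            0, 0, 1, 0, 0, 0;
            0, -1, 0, 0, 0, 0;
            1, 0, 0, 0, 0, 0] : Matrix (Fin 6) (Fin 6) K) i j) := by
  have hB : ∀ i j, Matrix.toBilin b (n32Form K) (b i) (b j) = n32Form K i j :=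
    Matrix.toLinearMap₂_apply_basis b b _
  refine ⟨Matrix.toBilin b (n32Form K),
    ((Matrix.isSymm_toBilin_iff_isSymm b).mpr (n32Form_isSymm K)).eq,
    ((n32Form_nondegenerate K).toBilin b).1,
    lieInvariant_of_gram_eq_n32Form b h12 h13 h23 hz _ hB, hB⟩

/-- The free 2-step nilpotent Lie algebra on three generators n_{3,2} admits an
ad-invariant nondegenerate symmetric bilinear form, concretely given on the basis
e₁,…,e₆ by B(e₁,e₆)=B(e₃,e₄)=1, B(e₂,e₅)=−1, all other pairings zero. -/
theorem n32_admits_ad_invariant_metric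
    {K L : Type*} [Field K] [CharZero K] [LieRing L] [LieAlgebra K L]
    [FiniteDimensional K L]
    (b : Module.Basis (Fin 6) K L)
    (h12 : ⁅b 0, b 1⁆ = b 3) (h13 : ⁅b 0, b 2⁆ = b 4) (h23 : ⁅b 1, b 2⁆ = b 5)
    (hz : ∀ i j : Fin 6, 3 ≤ j.val → ⁅b i, b j⁆ = 0) :
    ∃ B : L →ₗ[K] L →ₗ[K] K,
      (∀ x y : L, B x y = B y x) ∧
      (∀ x : L, (∀ y : L, B x y = 0) → x = 0) ∧
      (∀ x y z : L, B ⁅x, y⁆ z = - B y ⁅x, z⁆) ∧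
      (∀ i j : Fin 6, B (b i) (b j) =
        (!![0, 0, 0, 0, 0, 1;
            0, 0, 0, 0, -1, 0;
            0, 0, 0, 1, 0, 0;
            0, 0, 1, 0, 0, 0;
            0, -1, 0, 0, 0, 0;
            1, 0, 0, 0, 0, 0] : Matrix (Fin 6) (Fin 6) K) i j) :=
  n32_admits_ad_invariant_metric_general b h12 h13 h23 hz
end

section
/- The 5-dimensional free 3-step nilpotent Lie algebra n_{2,3} on two generators admits an ad-invariant nondegenerate symmetric bilinear form. Concretely, with basis e_1,…,e_5 and brackets [e_1,e_2]=e_3, [e_1,e_3]=e_4, [e_2,e_3]=e_5, the symmetric bilinear form B with B(e_1,e_5)=1, B(e_2,e_4)=−1, B(e_3,e_3)=1, and all other pairings of basis vectors zero, is nondegenerate and satisfies B([x,y],z) = −B(y,[x,z]) for all x,y,z. -/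
/-!
In the basis `e₁, …, e₅` the form `B` has the antidiagonal Gram matrix `M` with `M * M = 1`,
so `B` is symmetric and nondegenerate. The elements `x` for which `ad x` is skew-adjoint for
`B` form a Lie subalgebra (`ad ⁅x, y⁆ = ⁅ad x, ad y⁆` and skew-adjoint maps are closed under
commutators); since `e₁` and `e₂` generate `n₂,₃`, it is enough to check skew-adjointness of
`ad e₁` and `ad e₂`, and this can be checked on basis vectors.
-/

open LinearMap (BilinForm)

@[simp]
theorem Matrix.toBilin_apply_basis {R M ι : Type*} [CommRing R] [AddCommGroup M] [Module R M]
    [Fintype ι] [DecidableEq ι] (b : Module.Basis ι R M) (A : Matrix ι ι R) (i j : ι) :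
    Matrix.toBilin b A (b i) (b j) = A i j :=
  Matrix.toLinearMap₂_apply_basis b b A i j

namespace LinearMap.BilinForm

variable {R M ι : Type*} [CommRing R] [AddCommGroup M] [Module R M]

theorem isSkewAdjoint_of_basis (B : BilinForm R M) (b : Module.Basis ι R M) {f : Module.End R M}
    (h : ∀ i j, B (f (b i)) (b j) = -B (b i) (f (b j))) : B.IsSkewAdjoint f := by
  rw [IsSkewAdjoint, ← LinearMap.coe_neg, isAdjointPair_iff_comp_eq_compl₂]
  refine LinearMap.ext_basis b b fun i j => ?_
  simpa using h i j

theorem lieInvariant_of_lieSpan_eq_top {L : Type*} [LieRing L] [LieAlgebra R L]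
    (B : BilinForm R L) {s : Set L} (hs : LieSubalgebra.lieSpan R L s = ⊤)
    (h : ∀ x ∈ s, B.IsSkewAdjoint (LieAlgebra.ad R L x)) : B.lieInvariant L := by
  intro x
  induction (hs ▸ LieSubalgebra.mem_top x : x ∈ LieSubalgebra.lieSpan R L s)
    using LieSubalgebra.lieSpan_induction with
  | mem x hx =>
    intro y z
    simpa only [LieAlgebra.ad_apply, Pi.neg_apply, map_neg] using h x hx y z
  | zero => simp
  | add x₁ x₂ _ _ h₁ h₂ =>
    intro y z
    rw [add_lie, map_add, LinearMap.add_apply, h₁, h₂, add_lie, map_add, neg_add]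
  | smul a x _ hx => intro y z; simp [hx y z]
  | lie x₁ x₂ _ _ h₁ h₂ =>
    intro y z
    rw [lie_lie, lie_lie, map_sub, LinearMap.sub_apply, h₁, h₂, h₂, h₁, map_sub]
    ring

end LinearMap.BilinForm

section N23

variable (R : Type*) [CommRing R]

def n23Form : Matrix (Fin 5) (Fin 5) R :=
  !![0, 0, 0, 0, 1;
     0, 0, 0, -1, 0;
     0, 0, 1, 0, 0;
     0, -1, 0, 0, 0;
     1, 0, 0, 0, 0]

theorem n23Form_isSymm : (n23Form R).IsSymm := by
  ext i j
  fin_cases i <;> fin_cases j <;> rfl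

theorem n23Form_mul_self : n23Form R * n23Form R = 1 := by
  ext i j
  fin_cases i <;> fin_cases j <;> simp [n23Form, Matrix.mul_apply, Fin.sum_univ_five]

theorem n23Form_nondegenerate : (n23Form R).Nondegenerate :=
  .of_det_mem_nonZeroDivisors
    (Matrix.isUnit_det_of_left_inverse (n23Form_mul_self R)).mem_nonZeroDivisors

variable {R} {L : Type*} [LieRing L] [LieAlgebra R L] (b : Module.Basis (Fin 5) R L)

theorem n23_lieSpan_eq_top (h12 : ⁅b 0, b 1⁆ = b 2) (h13 : ⁅b 0, b 2⁆ = b 3)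
    (h23 : ⁅b 1, b 2⁆ = b 4) : LieSubalgebra.lieSpan R L {b 0, b 1} = ⊤ := by
  set S := LieSubalgebra.lieSpan R L {b 0, b 1}
  have h0 : b 0 ∈ S := LieSubalgebra.subset_lieSpan (by simp)
  have h1 : b 1 ∈ S := LieSubalgebra.subset_lieSpan (by simp)
  have h2 : b 2 ∈ S := h12 ▸ S.lie_mem h0 h1
  have h3 : b 3 ∈ S := h13 ▸ S.lie_mem h0 h2
  have h4 : b 4 ∈ S := h23 ▸ S.lie_mem h1 h2
  rw [← LieSubalgebra.toSubmodule_eq_top, eq_top_iff, ← b.span_eq, Submodule.span_le]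
  rintro _ ⟨i, rfl⟩
  fin_cases i <;> assumption

theorem n23_isSkewAdjoint_ad_generator (h12 : ⁅b 0, b 1⁆ = b 2) (h13 : ⁅b 0, b 2⁆ = b 3)
    (h23 : ⁅b 1, b 2⁆ = b 4) (hz : ∀ i j : Fin 5, 3 ≤ j.val → ⁅b i, b j⁆ = 0) :
    ∀ x ∈ ({b 0, b 1} : Set L),
      (Matrix.toBilin b (n23Form R)).IsSkewAdjoint (LieAlgebra.ad R L x) := by
  have h10 : ⁅b 1, b 0⁆ = -b 2 := by rw [← lie_skew, h12]
  rintro x (rfl | rfl) <;> refine LinearMap.BilinForm.isSkewAdjoint_of_basis _ b fun i j => ?_ <;>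
    fin_cases i <;> fin_cases j <;>
    simp [h12, h13, h23, h10, hz _ 3 (by decide), hz _ 4 (by decide), n23Form,
      -Matrix.toBilin_apply]

end N23

theorem n23_admits_ad_invariant_metric_general
    {K L : Type*} [Field K] [LieRing L] [LieAlgebra K L]
    (b : Module.Basis (Fin 5) K L)
    (h12 : ⁅b 0, b 1⁆ = b 2) (h13 : ⁅b 0, b 2⁆ = b 3) (h23 : ⁅b 1, b 2⁆ = b 4)
    (hz : ∀ i j : Fin 5, 3 ≤ j.val → ⁅b i, b j⁆ = 0) :
    ∃ B : L →ₗ[K] L →ₗ[K] K,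
      (∀ x y : L, B x y = B y x) ∧
      (∀ x : L, (∀ y : L, B x y = 0) → x = 0) ∧
      (∀ x y z : L, B ⁅x, y⁆ z = - B y ⁅x, z⁆) ∧
      (∀ i j : Fin 5, B (b i) (b j) =
        (!![0, 0, 0, 0, 1;
            0, 0, 0, -1, 0;
            0, 0, 1, 0, 0;
            0, -1, 0, 0, 0;
            1, 0, 0, 0, 0] : Matrix (Fin 5) (Fin 5) K) i j) := by
  refine ⟨Matrix.toBilin b (n23Form K), ?_, ?_, ?_, Matrix.toBilin_apply_basis b (n23Form K)⟩
  · exact ((Matrix.isSymm_toBilin_iff_isSymm b).mpr (n23Form_isSymm K)).eq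
  · exact (n23Form_nondegenerate K).separatingLeft.toBilin b
  · exact LinearMap.BilinForm.lieInvariant_of_lieSpan_eq_top _ (n23_lieSpan_eq_top b h12 h13 h23)
      (n23_isSkewAdjoint_ad_generator b h12 h13 h23 hz)

/-- The free 3-step nilpotent Lie algebra on two generators n_{2,3} admits an
ad-invariant nondegenerate symmetric bilinear form, concretely given on the basis
e₁,…,e₅ by B(e₁,e₅)=1, B(e₂,e₄)=−1, B(e₃,e₃)=1, all other pairings zero. -/
theorem n23_admits_ad_invariant_metric
    {K L : Type*} [Field K] [CharZero K] [LieRing L] [LieAlgebra K L]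
    [FiniteDimensional K L]
    (b : Module.Basis (Fin 5) K L)
    (h12 : ⁅b 0, b 1⁆ = b 2) (h13 : ⁅b 0, b 2⁆ = b 3) (h23 : ⁅b 1, b 2⁆ = b 4)
    (hz : ∀ i j : Fin 5, 3 ≤ j.val → ⁅b i, b j⁆ = 0) :
    ∃ B : L →ₗ[K] L →ₗ[K] K,
      (∀ x y : L, B x y = B y x) ∧
      (∀ x : L, (∀ y : L, B x y = 0) → x = 0) ∧
      (∀ x y z : L, B ⁅x, y⁆ z = - B y ⁅x, z⁆) ∧
      (∀ i j : Fin 5, B (b i) (b j) =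
        (!![0, 0, 0, 0, 1;
            0, 0, 0, -1, 0;
            0, 0, 1, 0, 0;
            0, -1, 0, 0, 0;
            1, 0, 0, 0, 0] : Matrix (Fin 5) (Fin 5) K) i j) :=
  n23_admits_ad_invariant_metric_general b h12 h13 h23 hz
end

section
/- On the Lie algebra n_{2,3} with basis e_1,…,e_5 and brackets [e_1,e_2]=e_3, [e_1,e_3]=e_4, [e_2,e_3]=e_5, every ad-invariant symmetric bilinear form ⟨·,·⟩ satisfies ⟨e_3,e_3⟩ = ⟨e_1,e_5⟩ = −⟨e_2,e_4⟩, and ⟨e_i,e_j⟩ = 0 for (i,j) ∈ {(1,3),(2,3),(1,4),(2,5),(3,4),(3,5),(4,4),(4,5),(5,5)}; if moreover the form is nondegenerate then ⟨e_3,e_3⟩ ≠ 0. -/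
/-- Every ad-invariant symmetric bilinear form on n_{2,3} satisfies
⟨e₃,e₃⟩ = ⟨e₁,e₅⟩ = −⟨e₂,e₄⟩ and the listed pairings vanish; if the form is moreover
nondegenerate then ⟨e₃,e₃⟩ ≠ 0. -/
theorem n23_ad_invariant_form_structure
    {K L : Type*} [Field K] [CharZero K] [LieRing L] [LieAlgebra K L]
    [FiniteDimensional K L]
    (b : Module.Basis (Fin 5) K L)
    (h12 : ⁅b 0, b 1⁆ = b 2) (h13 : ⁅b 0, b 2⁆ = b 3) (h23 : ⁅b 1, b 2⁆ = b 4)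
    (hz : ∀ i j : Fin 5, 3 ≤ j.val → ⁅b i, b j⁆ = 0)
    (B : L →ₗ[K] L →ₗ[K] K)
    (hsymm : ∀ x y : L, B x y = B y x)
    (hinv : ∀ x y z : L, B ⁅x, y⁆ z + B y ⁅x, z⁆ = 0) :
    B (b 2) (b 2) = B (b 0) (b 4) ∧
    B (b 0) (b 4) = - B (b 1) (b 3) ∧
    B (b 0) (b 2) = 0 ∧ B (b 1) (b 2) = 0 ∧
    B (b 0) (b 3) = 0 ∧ B (b 1) (b 4) = 0 ∧
    B (b 2) (b 3) = 0 ∧ B (b 2) (b 4) = 0 ∧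
    B (b 3) (b 3) = 0 ∧ B (b 3) (b 4) = 0 ∧ B (b 4) (b 4) = 0 ∧
    ((∀ x : L, (∀ y : L, B x y = 0) → x = 0) → B (b 2) (b 2) ≠ 0) := by
  have h02 : B (b 0) (b 2) = 0 := by
    have h := hinv (b 0) (b 1) (b 0)
    rw [h12, lie_self] at h
    simpa [hsymm (b 2) (b 0)] using h
  have h12' : B (b 1) (b 2) = 0 := by
    have h := hinv (b 0) (b 1) (b 1)
    rw [h12] at h
    rw [hsymm (b 2) (b 1)] at h
    exact add_self_eq_zero.mp h
  have h13' : B (b 1) (b 3) = - B (b 2) (b 2) := by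
    have h := hinv (b 0) (b 1) (b 2)
    rw [h12, h13] at h
    linear_combination h
  have h23' : B (b 2) (b 3) = 0 := by
    have h := hinv (b 0) (b 1) (b 3)
    rw [h12, hz 0 3 (by decide)] at h
    simpa using h
  have h24 : B (b 2) (b 4) = 0 := by
    have h := hinv (b 0) (b 1) (b 4)
    rw [h12, hz 0 4 (by decide)] at h
    simpa using h
  have h03 : B (b 0) (b 3) = 0 := by
    have h := hinv (b 0) (b 2) (b 0)
    rw [h13, lie_self] at h
    simpa [hsymm (b 3) (b 0)] using h
  have h33 : B (b 3) (b 3) = 0 := by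
    have h := hinv (b 0) (b 2) (b 3)
    rw [h13, hz 0 3 (by decide)] at h
    simpa using h
  have h34 : B (b 3) (b 4) = 0 := by
    have h := hinv (b 0) (b 2) (b 4)
    rw [h13, hz 0 4 (by decide)] at h
    simpa using h
  have h04 : B (b 0) (b 4) = B (b 2) (b 2) := by
    have h := hinv (b 1) (b 2) (b 0)
    have hba : ⁅b 1, b 0⁆ = -(b 2) := by rw [← lie_skew, h12]
    rw [h23, hba] at h
    simp only [map_neg] at h
    rw [hsymm (b 4) (b 0)] at h
    linear_combination h
  have h14 : B (b 1) (b 4) = 0 := by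
    have h := hinv (b 1) (b 2) (b 1)
    rw [h23, lie_self] at h
    simpa [hsymm (b 4) (b 1)] using h
  have h44 : B (b 4) (b 4) = 0 := by
    have h := hinv (b 1) (b 2) (b 4)
    rw [h23, hz 1 4 (by decide)] at h
    simpa using h
  refine ⟨h04.symm, by rw [h04, h13']; ring, h02, h12', h03, h14, h23', h24, h33, h34, h44, ?_⟩
  intro hnd h22
  have hB3 : B (b 3) = 0 := by
    apply b.ext
    intro i
    fin_cases i <;>
      simp [hsymm (b 3) (b 0), hsymm (b 3) (b 1), hsymm (b 3) (b 2),
        h03, h13', h23', h33, h34, h22]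
  have : b 3 = 0 := hnd (b 3) (fun y => by rw [hB3]; rfl)
  exact b.ne_zero 3 this
end
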